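/- Define for n ∈ ℕ the Laurent polynomial a_n(q) := (−1)^n q^{n(n+3)/2 − 1} Σ_{k=1}^{n+1} q^{k²} [n+k choose 2k−1]_q (the n-th Habiro cyclotomic coefficient of the mirror of the (2,5)-torus knot). Let p ≥ 3 be an odd integer, let e_p be a primitive p-th root of unity in ℂ, and let m ≥ 1 be an integer. Then the evaluations satisfy a_{mp}(e_p) = a_{2m}(−1) + a_{m−1}(1) · ( 2 + a_p(e_p) ). -/

import Mathlib

/-- Evaluation at `ζ : ℂ` of the Gaussian binomial coefficient `[n choose k]_q ∈ ℤ[q]`,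
defined by the `q`-Pascal recursion, agreeing with
`∏_{i=1}^{k} (1−q^{n−k+i})/(1−q^i)` for `k ≤ n` and with `0` for `k > n`. -/
def qbinom : ℕ → ℕ → ℂ → ℂ
  | _, 0, _ => 1
  | 0, _ + 1, _ => 0
  | n + 1, k + 1, ζ => qbinom n k ζ + ζ ^ (k + 1) * qbinom n (k + 1) ζ

/-- The `n`-th Habiro cyclotomic coefficient of the mirror of the `(2,5)`-torus knot,
`a_n(q) = (−1)^n q^{n(n+3)/2 − 1} Σ_{k=1}^{n+1} q^{k²} [n+k choose 2k−1]_q`,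
evaluated at `ζ ≠ 0`. -/
noncomputable def aCoef (n : ℕ) (ζ : ℂ) : ℂ :=
  (-1) ^ n * ζ ^ (((n * (n + 3) / 2 : ℕ) : ℤ) - 1) *
    ∑ k ∈ Finset.Icc 1 (n + 1), ζ ^ (k ^ 2) * qbinom (n + k) (2 * k - 1) ζ

/-!
At a primitive `p`-th root of unity `ζ` the Gaussian binomials satisfy the `q`-Lucas theorem
`[A p + a, B p + b]_ζ = (A choose B) [a, b]_ζ` for `a, b < p`: by the `q`-binomial theorem they are,
up to the factor `(-1)^k ζ^(k choose 2)`, the coefficients of `∏_{i<n} (1 - ζ^i X)`, and this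
product is periodic in blocks of length `p` with `∏_{i<p} (1 - ζ^i X) = 1 - X^p`.
Writing the summation index of `a_{mp}(ζ)` as `k = j p + i` with `i < p`, the summand becomes a
binomial coefficient in `m + j` times a quantity depending on `i` alone; only `i = 1` and
`i > p / 2` survive, so `a_{mp}(ζ)` is a combination of `Σ_j (m+j choose 2j)`,
`Σ_j (m+j choose 2j+1)` and one sum `S` over `p / 2 < i < p`. The same computation for `p = 2`,
`ζ = -1`, the evaluation `[n, k]_1 = (n choose k)`, and the case `m = 1` (which expresses `S`
through `a_p(ζ)`) turn this into the identity.
-/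

open Finset Polynomial

theorem sum_range_mul_eq_sum_sum {M : Type*} [AddCommMonoid M] (f : ℕ → M) (n q : ℕ) :
    ∑ k ∈ range (n * q), f k = ∑ j ∈ range n, ∑ i ∈ range q, f (j * q + i) := by
  induction n with
  | zero => simp
  | succ n ih => rw [Nat.succ_mul, sum_range_add, ih, sum_range_succ]

theorem Function.Periodic.prod_range_mul_add {M : Type*} [CommMonoid M] {f : ℕ → M} {p : ℕ}
    (hf : Function.Periodic f p) (A a : ℕ) :
    ∏ i ∈ range (A * p + a), f i = (∏ i ∈ range p, f i) ^ A * ∏ i ∈ range a, f i := by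
  induction A with
  | zero => simp
  | succ A ih =>
    have hshift (x : ℕ) : f (p + x) = f x := by rw [add_comm]; exact hf x
    rw [show (A + 1) * p + a = p + (A * p + a) by ring, prod_range_add]
    simp only [hshift]
    rw [ih, pow_succ', mul_assoc]

theorem qbinom_eq_zero_of_lt {n k : ℕ} (ζ : ℂ) (h : n < k) : qbinom n k ζ = 0 := by
  induction n generalizing k with
  | zero => obtain ⟨k, rfl⟩ := Nat.exists_eq_add_one_of_ne_zero (by omega : k ≠ 0); rfl
  | succ n ih =>
    obtain ⟨k, rfl⟩ := Nat.exists_eq_add_one_of_ne_zero (by omega : k ≠ 0)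
    rw [qbinom, ih (by omega), ih (by omega), mul_zero, add_zero]

theorem qbinom_self (n : ℕ) (ζ : ℂ) : qbinom n n ζ = 1 := by
  induction n with
  | zero => rfl
  | succ n ih => rw [qbinom, ih, qbinom_eq_zero_of_lt ζ n.lt_succ_self, mul_zero, add_zero]

theorem qbinom_one (n k : ℕ) : qbinom n k 1 = n.choose k := by
  induction n generalizing k with
  | zero => cases k <;> simp [qbinom]
  | succ n ih => cases k <;> simp [qbinom, ih, Nat.choose_succ_succ]

theorem coeff_prod_one_sub_C_mul_X (ζ t : ℂ) (n k : ℕ) :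
    (∏ i ∈ range n, (1 - C (t * ζ ^ i) * X)).coeff k =
      (-t) ^ k * ζ ^ k.choose 2 * qbinom n k ζ := by
  induction n generalizing t k with
  | zero => cases k <;> simp [qbinom, coeff_one]
  | succ n ih =>
    have hfactor : ∏ i ∈ range (n + 1), (1 - C (t * ζ ^ i) * X) =
        (∏ i ∈ range n, (1 - C (t * ζ * ζ ^ i) * X)) * (1 - C t * X) := by
      simp [prod_range_succ', pow_succ', mul_assoc]
    rw [hfactor, mul_sub, mul_one, ← mul_assoc, coeff_sub]
    cases k with
    | zero => rw [coeff_mul_X_zero, ih]; simp [qbinom]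
    | succ k =>
      rw [coeff_mul_X, coeff_mul_C, ih, ih, qbinom, Nat.choose_succ_succ', Nat.choose_one_right]
      ring

theorem IsPrimitiveRoot.prod_one_sub_C_pow_mul_X {K : Type*} [Field K] [Infinite K] {ζ : K}
    {p : ℕ} (hζ : IsPrimitiveRoot ζ p) (hp : 0 < p) :
    ∏ i ∈ range p, (1 - C (ζ ^ i) * X) = 1 - X ^ p := by
  have hroots (y : K) : ∏ i ∈ range p, (y - ζ ^ i) = y ^ p - 1 := by
    simpa [eval_prod] using (congrArg (eval y) (X_pow_sub_C_eq_prod hζ hp (one_pow p))).symm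
  refine Polynomial.funext fun x => ?_
  simp only [eval_prod, eval_sub, eval_one, eval_mul, eval_C, eval_X, eval_pow]
  rcases eq_or_ne x 0 with rfl | hx
  · simp [zero_pow hp.ne']
  · calc ∏ i ∈ range p, (1 - ζ ^ i * x) = ∏ i ∈ range p, (x * (x⁻¹ - ζ ^ i)) :=
          prod_congr rfl fun i _ => by field_simp
      _ = x ^ p * (x⁻¹ ^ p - 1) := by rw [prod_mul_distrib, prod_const, card_range, hroots]
      _ = 1 - x ^ p := by rw [inv_pow]; field_simp

theorem coeff_expand_mul_add {R : Type*} [CommSemiring R] {p : ℕ} (f g : R[X])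
    (hg : g.natDegree < p) (B : ℕ) {b : ℕ} (hb : b < p) :
    (expand R p f * g).coeff (B * p + b) = f.coeff B * g.coeff b := by
  have hp : 0 < p := by omega
  rw [coeff_mul, sum_eq_single (B * p, b)]
  · rw [coeff_expand hp, if_pos (dvd_mul_left p B), Nat.mul_div_cancel _ hp]
  · rintro ⟨x, y⟩ hxy hne
    rw [HasAntidiagonal.mem_antidiagonal] at hxy
    rw [coeff_expand hp]
    split_ifs with hdvd
    · obtain ⟨j, rfl⟩ := hdvd
      simp only at hxy ⊢
      rw [Nat.mul_div_cancel_left _ hp, mul_comm p j] at *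
      rcases lt_trichotomy j B with h | rfl | h
      · have : p ≤ y := by nlinarith
        rw [coeff_eq_zero_of_natDegree_lt (p := g) (by omega), mul_zero]
      · rw [Nat.add_left_cancel_iff] at hxy
        exact absurd (by rw [hxy]) hne
      · nlinarith
    · rw [zero_mul]
  · simp

theorem coeff_one_sub_X_pow {R : Type*} [CommRing R] (n k : ℕ) :
    ((1 - X : R[X]) ^ n).coeff k = (-1) ^ k * n.choose k := by
  induction n generalizing k with
  | zero => cases k <;> simp [coeff_one]
  | succ n ih =>
    rw [pow_succ, mul_sub, mul_one, coeff_sub]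
    cases k with
    | zero => simp [ih]
    | succ k => rw [coeff_mul_X, ih, ih, Nat.choose_succ_succ]; push_cast; ring

theorem qbinom_mul_add_mul_add {ζ : ℂ} {p : ℕ} (hζ : IsPrimitiveRoot ζ p) (A B : ℕ) {a b : ℕ}
    (ha : a < p) (hb : b < p) :
    qbinom (A * p + a) (B * p + b) ζ = A.choose B * qbinom a b ζ := by
  have hp : 0 < p := by omega
  have hcoeff (n k : ℕ) : (∏ i ∈ range n, (1 - C (ζ ^ i) * X)).coeff k =
      (-1) ^ k * ζ ^ k.choose 2 * qbinom n k ζ := by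
    simpa using coeff_prod_one_sub_C_mul_X ζ 1 n k
  have hsign (n : ℕ) : (-1) ^ n * ζ ^ n.choose 2 = ∏ i ∈ range n, -ζ ^ i := by
    rw [prod_neg, prod_pow_eq_pow_sum, sum_range_id, Nat.choose_two_right, card_range]
  have hsign_p : ∏ i ∈ range p, -ζ ^ i = -1 := by
    have h := hcoeff p p
    rw [hζ.prod_one_sub_C_pow_mul_X hp, qbinom_self, mul_one, hsign] at h
    simpa [coeff_one, hp.ne'] using h.symm
  have hsplit : ∏ i ∈ range (A * p + a), (1 - C (ζ ^ i) * X) =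
      expand ℂ p ((1 - X) ^ A) * ∏ i ∈ range a, (1 - C (ζ ^ i) * X) := by
    have hper : Function.Periodic (fun i => 1 - C (ζ ^ i) * X) p := fun i => by
      simp [pow_add, hζ.pow_eq_one]
    rw [hper.prod_range_mul_add, hζ.prod_one_sub_C_pow_mul_X hp, map_pow, map_sub, map_one,
      expand_X]
  have hdeg : (∏ i ∈ range a, (1 - C (ζ ^ i) * X)).natDegree < p := by
    refine lt_of_le_of_lt (natDegree_le_iff_coeff_eq_zero.mpr fun k hk => ?_) ha
    rw [hcoeff, qbinom_eq_zero_of_lt ζ (by exact_mod_cast hk), mul_zero]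
  have hperiodic : Function.Periodic (fun i => -ζ ^ i) p := fun i => by
    simp [pow_add, hζ.pow_eq_one]
  have key := congrArg (coeff · (B * p + b)) hsplit
  simp only [hcoeff, coeff_expand_mul_add _ _ hdeg B hb, coeff_one_sub_X_pow] at key
  rw [hsign, hperiodic.prod_range_mul_add, hsign_p, ← hsign] at key
  have hne : (-1) ^ B * ((-1) ^ b * ζ ^ b.choose 2) ≠ 0 := by
    simp [hζ.ne_zero hp.ne']
  apply mul_left_cancel₀ hne
  linear_combination key

def aCoefTerm (n k : ℕ) (ζ : ℂ) : ℂ := ζ ^ (k ^ 2) * qbinom (n + k) (2 * k - 1) ζ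

def tailSum (p : ℕ) (ζ : ℂ) : ℂ :=
  ∑ i ∈ Ico (p / 2 + 1) p, ζ ^ (i ^ 2) * qbinom i (2 * i - 1 - p) ζ

theorem aCoef_eq_of_ne_zero {ζ : ℂ} (hζ : ζ ≠ 0) (n : ℕ) :
    aCoef n ζ =
      (-1) ^ n * ζ ^ (n * (n + 3) / 2) * ζ⁻¹ * ∑ k ∈ Icc 1 (n + 1), aCoefTerm n k ζ := by
  rw [aCoef, zpow_sub₀ hζ, zpow_natCast, zpow_one, div_eq_mul_inv, mul_assoc _ _ ζ⁻¹]
  rfl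

/-- The `1` is the term `k = 0`, where `2 * 0 - 1 = 0` in `ℕ`. -/
theorem sum_range_aCoefTerm (ζ : ℂ) {n N : ℕ} (hN : n + 2 ≤ N) :
    ∑ k ∈ range N, aCoefTerm n k ζ = 1 + ∑ k ∈ Icc 1 (n + 1), aCoefTerm n k ζ := by
  have hvanish : ∑ k ∈ Ico (n + 2) N, aCoefTerm n k ζ = 0 :=
    sum_eq_zero fun k hk => by
      rw [aCoefTerm, qbinom_eq_zero_of_lt ζ (by simp only [mem_Ico] at hk; omega), mul_zero]
  rw [← sum_range_add_sum_Ico _ hN, hvanish, add_zero, range_eq_Ico,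
    sum_eq_sum_Ico_succ_bot (by omega), ← Ico_add_one_right_eq_Icc]
  simp [aCoefTerm, qbinom, add_assoc]

theorem aCoefTerm_mul_add {e : ℂ} {p : ℕ} (he : IsPrimitiveRoot e p) (m j B : ℕ) {i r : ℕ}
    (hi : i < p) (hr : r < p) (h : 2 * (j * p + i) - 1 = B * p + r) :
    aCoefTerm (m * p) (j * p + i) e = (m + j).choose B * (e ^ (i ^ 2) * qbinom i r e) := by
  have hsq : e ^ ((j * p + i) ^ 2) = e ^ (i ^ 2) := by
    rw [show (j * p + i) ^ 2 = p * (j * (j * p + 2 * i)) + i ^ 2 by ring, pow_add, pow_mul,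
      he.pow_eq_one, one_pow, one_mul]
  rw [aCoefTerm, hsq, show m * p + (j * p + i) = (m + j) * p + i by ring, h,
    qbinom_mul_add_mul_add he _ _ hi hr]
  ring

theorem sum_range_aCoefTerm_mul_add {e : ℂ} {p : ℕ} (hp : 2 ≤ p) (he : IsPrimitiveRoot e p)
    (m j : ℕ) :
    ∑ i ∈ range p, aCoefTerm (m * p) (j * p + i) e =
      (if j = 0 then 1 else 0) + e * (m + j).choose (2 * j) +
        (m + j).choose (2 * j + 1) * tailSum p e := by
  have hzero : aCoefTerm (m * p) (j * p + 0) e = if j = 0 then 1 else 0 := by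
    rcases j with _ | j
    · rw [aCoefTerm_mul_add he m 0 0 (r := 0) (by omega) (by omega) (by simp)]
      simp [qbinom]
    · rw [aCoefTerm_mul_add he m (j + 1) (2 * j + 1) (r := p - 1) (by omega) (by omega)
        (by ring_nf; omega), qbinom_eq_zero_of_lt e (by omega : 0 < p - 1)]
      simp
  have hone : aCoefTerm (m * p) (j * p + 1) e = e * (m + j).choose (2 * j) := by
    rw [aCoefTerm_mul_add he m j (2 * j) (r := 1) (by omega) (by omega) (by ring_nf; omega),
      qbinom_self]
    ring
  have hmiddle : ∀ i ∈ Ico 2 (p / 2 + 1), aCoefTerm (m * p) (j * p + i) e = 0 := fun i hi => by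
    simp only [mem_Ico] at hi
    rw [aCoefTerm_mul_add he m j (2 * j) (r := 2 * i - 1) (by omega) (by omega)
      (by ring_nf; omega), qbinom_eq_zero_of_lt e (by omega : i < 2 * i - 1)]
    simp
  have htail : ∀ i ∈ Ico (p / 2 + 1) p, aCoefTerm (m * p) (j * p + i) e =
      (m + j).choose (2 * j + 1) * (e ^ (i ^ 2) * qbinom i (2 * i - 1 - p) e) := fun i hi => by
    simp only [mem_Ico] at hi
    exact aCoefTerm_mul_add he m j (2 * j + 1) hi.2 (by omega) (by ring_nf; omega)
  rw [range_eq_Ico, ← sum_Ico_consecutive _ (Nat.zero_le _) (by omega : p / 2 + 1 ≤ p),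
    ← sum_Ico_consecutive _ (Nat.zero_le 2) (by omega : 2 ≤ p / 2 + 1), ← range_eq_Ico,
    sum_eq_zero hmiddle, sum_congr rfl htail, ← mul_sum, tailSum, sum_range_succ,
    sum_range_one, hzero, hone, add_zero]

theorem sum_Icc_aCoefTerm_mul {e : ℂ} {p : ℕ} (hp : 2 ≤ p) (he : IsPrimitiveRoot e p) (m : ℕ) :
    ∑ k ∈ Icc 1 (m * p + 1), aCoefTerm (m * p) k e =
      e * ∑ j ∈ range (m + 1), ((m + j).choose (2 * j) : ℂ) +
        (∑ j ∈ range (m + 1), ((m + j).choose (2 * j + 1) : ℂ)) * tailSum p e := by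
  have h := sum_range_aCoefTerm e (n := m * p) (N := (m + 1) * p) (by ring_nf; omega)
  rw [sum_range_mul_eq_sum_sum, sum_congr rfl fun j _ => sum_range_aCoefTerm_mul_add hp he m j,
    sum_add_distrib, sum_add_distrib, sum_ite_eq' _ 0, if_pos (by simp), ← mul_sum,
    ← sum_mul] at h
  linear_combination -h

theorem dvd_mul_add_three_div_two {p n : ℕ} (hodd : Odd p) (hpn : p ∣ n) :
    p ∣ n * (n + 3) / 2 := by
  have heven : Even (n * (n + 3)) := by
    rw [show n * (n + 3) = n * (n + 1) + 2 * n by ring]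
    exact (Nat.even_mul_succ_self n).add (even_two_mul n)
  refine hodd.coprime_two_right.dvd_of_dvd_mul_right ?_
  rw [Nat.div_mul_cancel heven.two_dvd]
  exact hpn.mul_right _

theorem aCoef_mul_of_odd {e : ℂ} {p : ℕ} (hp : 2 ≤ p) (hodd : Odd p)
    (he : IsPrimitiveRoot e p) (m : ℕ) :
    aCoef (m * p) e = (-1) ^ m * e⁻¹ *
      (e * ∑ j ∈ range (m + 1), ((m + j).choose (2 * j) : ℂ) +
        (∑ j ∈ range (m + 1), ((m + j).choose (2 * j + 1) : ℂ)) * tailSum p e) := by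
  have hsign : (-1 : ℂ) ^ (m * p) = (-1) ^ m := by rw [mul_comm, pow_mul, hodd.neg_one_pow]
  have htriangle : e ^ (m * p * (m * p + 3) / 2) = 1 :=
    (he.pow_eq_one_iff_dvd _).mpr (dvd_mul_add_three_div_two hodd (dvd_mul_left p m))
  rw [aCoef_eq_of_ne_zero (he.ne_zero (by omega)), sum_Icc_aCoefTerm_mul hp he, hsign, htriangle,
    mul_one]

theorem aCoef_two_mul_neg_one (m : ℕ) :
    aCoef (2 * m) (-1) = (-1) ^ m * ∑ j ∈ range (m + 1), ((m + j).choose (2 * j) : ℂ) := by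
  have hprim : IsPrimitiveRoot (-1 : ℂ) 2 := IsPrimitiveRoot.neg_one 0 (by norm_num)
  have hexp : 2 * m * (2 * m + 3) / 2 = m + 2 * (m * (m + 1)) := by
    rw [Nat.div_eq_of_eq_mul_left two_pos]; ring
  rw [aCoef_eq_of_ne_zero (by norm_num), hexp, mul_comm 2 m, sum_Icc_aCoefTerm_mul le_rfl hprim]
  have htail : tailSum 2 (-1) = 0 := by simp [tailSum]
  have h2 : (-1 : ℂ) ^ (m * 2) = 1 := (even_two.mul_left m).neg_one_pow
  rw [htail, h2, pow_add, (even_two_mul _).neg_one_pow, inv_neg_one]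
  ring

theorem aCoef_one (n : ℕ) :
    aCoef n 1 = (-1) ^ n * ∑ j ∈ range (n + 1 + 1), ((n + 1 + j).choose (2 * j + 1) : ℂ) := by
  have h := sum_range_aCoefTerm 1 (le_refl (n + 2))
  have hterm (j : ℕ) : aCoefTerm n (j + 1) 1 = (n + 1 + j).choose (2 * j + 1) := by
    rw [aCoefTerm, one_pow, one_mul, qbinom_one, show n + (j + 1) = n + 1 + j by ring,
      show 2 * (j + 1) - 1 = 2 * j + 1 by omega]
  have h0 : aCoefTerm n 0 1 = 1 := by simp [aCoefTerm, qbinom]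
  rw [sum_range_succ', h0, add_comm, add_left_cancel_iff] at h
  simp only [hterm] at h
  rw [aCoef_eq_of_ne_zero one_ne_zero, sum_range_succ,
    Nat.choose_eq_zero_of_lt (by omega : n + 1 + (n + 1) < 2 * (n + 1) + 1), ← h]
  simp

theorem stmt19 (p : ℕ) (hp : 3 ≤ p) (hodd : Odd p) (e : ℂ) (he : IsPrimitiveRoot e p)
    (m : ℕ) (hm : 1 ≤ m) :
    aCoef (m * p) e = aCoef (2 * m) (-1) + aCoef (m - 1) 1 * (2 + aCoef p e) := by
  obtain ⟨n, rfl⟩ : ∃ n, m = n + 1 := ⟨m - 1, by omega⟩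
  have he0 : e ≠ 0 := he.ne_zero (by omega)
  have hap : aCoef p e = -e⁻¹ * (2 * e + tailSum p e) := by
    have h := aCoef_mul_of_odd (by omega) hodd he 1
    simp only [one_mul, sum_range_succ, sum_range_zero] at h
    norm_num at h
    rw [h]
    ring
  rw [aCoef_mul_of_odd (by omega) hodd he, aCoef_two_mul_neg_one, Nat.add_sub_cancel, aCoef_one,
    hap]
  field_simp
  ring
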